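/- arXiv:2506.02455 — 4 statements merged into one kernel-verified Lean document; each statement's English description precedes it below -/
import Mathlib

section
/- If the complete bipartite graph $K_{n,n}$ admits a perfect $1$-factorisation (a partition of its edges into perfect matchings such that the union of any two matchings is a Hamiltonian cycle), then $n = 2$ or $n$ is odd. -/
/-- A perfect matching of `G`, given as a set of edges:
a subset of the edge set such that every vertex lies in exactly one edge. -/
def IsPM {V : Type*} (G : SimpleGraph V) (f : Set (Sym2 V)) : Prop :=
  f ⊆ G.edgeSet ∧ ∀ v : V, ∃! e, e ∈ f ∧ v ∈ e

/-- A 1-factorisation of `G`: a partition of its edge set into perfect matchings. -/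
def IsOneFactorisation {V : Type*} (G : SimpleGraph V) (P : Set (Set (Sym2 V))) : Prop :=
  (∀ f ∈ P, IsPM G f) ∧ P.PairwiseDisjoint id ∧ ⋃₀ P = G.edgeSet

/-- The edge set `E` forms a Hamiltonian cycle of `G`. -/
def IsHamCycleEdges {V : Type*} [DecidableEq V] (G : SimpleGraph V) (E : Set (Sym2 V)) : Prop :=
  E ⊆ G.edgeSet ∧ ∃ (v : V) (w : G.Walk v v), w.IsHamiltonianCycle ∧ {e | e ∈ w.edges} = E

/-- A perfect 1-factorisation: the union of any two distinct 1-factors is a Hamiltonian cycle. -/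
def IsPerfectOneFactorisation {V : Type*} [DecidableEq V] (G : SimpleGraph V) (P : Set (Set (Sym2 V))) : Prop :=
  IsOneFactorisation G P ∧ ∀ f ∈ P, ∀ f' ∈ P, f ≠ f' → IsHamCycleEdges G (f ∪ f')

open Sum SimpleGraph

namespace POF

variable {n : ℕ} {f : Set (Sym2 (Fin n ⊕ Fin n))}

lemma pm_unique_right (hf : IsPM (completeBipartiteGraph (Fin n) (Fin n)) f) (i : Fin n) :
    ∃! j : Fin n, s(inl i, inr j) ∈ f := by
  obtain ⟨e, ⟨hef, hie⟩, huniq⟩ := hf.2 (inl i)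
  have he : e ∈ (completeBipartiteGraph (Fin n) (Fin n)).edgeSet := hf.1 hef
  induction e using Sym2.ind with
  | _ x y =>
    rw [SimpleGraph.mem_edgeSet] at he
    rcases x with a | b <;> rcases y with a' | b' <;>
      simp only [completeBipartiteGraph_adj, isLeft_inl, isRight_inl, isLeft_inr,
        isRight_inr] at he
    · simp at he
    · -- x = inl a, y = inr b'
      have ha : a = i := by
        rcases Sym2.mem_iff.mp hie with h | h
        · exact (Sum.inl.inj h).symm
        · exact absurd h (by simp)
      subst ha
      refine ⟨b', hef, ?_⟩
      intro j' hj'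
      have heq := huniq _ ⟨hj', by simp⟩
      simp only [Sym2.eq_iff] at heq
      rcases heq with ⟨h1, h2⟩ | ⟨h1, h2⟩ <;> simp_all
    · -- x = inr b, y = inl a'
      have ha : a' = i := by
        rcases Sym2.mem_iff.mp hie with h | h
        · exact absurd h (by simp)
        · exact (Sum.inl.inj h).symm
      subst ha
      refine ⟨b, ?_, ?_⟩
      · show s(inl a', inr b) ∈ f
        rwa [Sym2.eq_swap]
      intro j' hj'
      have heq := huniq _ ⟨hj', by simp⟩
      simp only [Sym2.eq_iff] at heq
      rcases heq with ⟨h1, h2⟩ | ⟨h1, h2⟩ <;> simp_all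
    · simp at he

lemma pm_unique_left (hf : IsPM (completeBipartiteGraph (Fin n) (Fin n)) f) (j : Fin n) :
    ∃! i : Fin n, s(inl i, inr j) ∈ f := by
  obtain ⟨e, ⟨hef, hie⟩, huniq⟩ := hf.2 (inr j)
  have he : e ∈ (completeBipartiteGraph (Fin n) (Fin n)).edgeSet := hf.1 hef
  induction e using Sym2.ind with
  | _ x y =>
    rw [SimpleGraph.mem_edgeSet] at he
    rcases x with a | b <;> rcases y with a' | b' <;>
      simp only [completeBipartiteGraph_adj, isLeft_inl, isRight_inl, isLeft_inr,
        isRight_inr] at he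
    · simp at he
    · have hb : b' = j := by
        rcases Sym2.mem_iff.mp hie with h | h
        · exact absurd h (by simp)
        · exact (Sum.inr.inj h).symm
      subst hb
      refine ⟨a, hef, ?_⟩
      intro i' hi'
      have heq := huniq _ ⟨hi', by simp⟩
      simp only [Sym2.eq_iff] at heq
      rcases heq with ⟨h1, h2⟩ | ⟨h1, h2⟩ <;> simp_all
    · have hb : b = j := by
        rcases Sym2.mem_iff.mp hie with h | h
        · exact (Sum.inr.inj h).symm
        · exact absurd h (by simp)
      subst hb
      refine ⟨a', ?_, ?_⟩
      · show s(inl a', inr b) ∈ f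
        rwa [Sym2.eq_swap]
      intro i' hi'
      have heq := huniq _ ⟨hi', by simp⟩
      simp only [Sym2.eq_iff] at heq
      rcases heq with ⟨h1, h2⟩ | ⟨h1, h2⟩ <;> simp_all
    · simp at he

/-- The permutation of `Fin n` associated to a perfect matching of `K_{n,n}`. -/
noncomputable def pmEquiv (hf : IsPM (completeBipartiteGraph (Fin n) (Fin n)) f) :
    Fin n ≃ Fin n where
  toFun i := (pm_unique_right hf i).exists.choose
  invFun j := (pm_unique_left hf j).exists.choose
  left_inv i := by
    have h1 := (pm_unique_right hf i).exists.choose_spec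
    have h2 := (pm_unique_left hf ((pm_unique_right hf i).exists.choose)).exists.choose_spec
    exact (pm_unique_left hf _).unique h2 h1
  right_inv j := by
    have h1 := (pm_unique_left hf j).exists.choose_spec
    have h2 := (pm_unique_right hf ((pm_unique_left hf j).exists.choose)).exists.choose_spec
    exact (pm_unique_right hf _).unique h2 h1

lemma pmEquiv_mem (hf : IsPM (completeBipartiteGraph (Fin n) (Fin n)) f) (i : Fin n) :
    s(inl i, inr (pmEquiv hf i)) ∈ f :=
  (pm_unique_right hf i).exists.choose_spec

lemma pmEquiv_eq (hf : IsPM (completeBipartiteGraph (Fin n) (Fin n)) f) {i j : Fin n}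
    (h : s(inl i, inr j) ∈ f) : pmEquiv hf i = j :=
  (pm_unique_right hf i).unique (pmEquiv_mem hf i) h

lemma exists_ne_ne (hn : 3 ≤ n) (a b : Fin n) : ∃ j : Fin n, j ≠ a ∧ j ≠ b := by
  have hcard : ({a, b} : Finset (Fin n)).card ≤ 2 := by
    apply le_trans (Finset.card_insert_le _ _)
    simp
  have : (({a, b} : Finset (Fin n))ᶜ).Nonempty := by
    rw [← Finset.card_pos, Finset.card_compl, Fintype.card_fin]
    omega
  obtain ⟨j, hj⟩ := this
  simp only [Finset.mem_compl, Finset.mem_insert, Finset.mem_singleton, not_or] at hj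
  exact ⟨j, hj.1, hj.2⟩

lemma sign_mul_sign (hn : 3 ≤ n) {f f' : Set (Sym2 (Fin n ⊕ Fin n))}
    (hf : IsPM (completeBipartiteGraph (Fin n) (Fin n)) f)
    (hf' : IsPM (completeBipartiteGraph (Fin n) (Fin n)) f')
    (hham : IsHamCycleEdges (completeBipartiteGraph (Fin n) (Fin n)) (f ∪ f')) :
    Equiv.Perm.sign (pmEquiv hf) * Equiv.Perm.sign (pmEquiv hf') = -(-1 : ℤˣ) ^ n := by
  obtain ⟨hsub, v, w, hwham, hedges⟩ := hham
  have hsub' : ∀ e ∈ w.edges, e ∈ (SimpleGraph.fromEdgeSet (f ∪ f')).edgeSet := by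
    intro e he
    have hmem : e ∈ f ∪ f' := by rw [← hedges]; exact he
    rw [SimpleGraph.edgeSet_fromEdgeSet]
    exact ⟨hmem, (completeBipartiteGraph (Fin n) (Fin n)).not_isDiag_of_mem_edgeSet (hsub hmem)⟩
  have hreach : ∀ u u' : Fin n ⊕ Fin n, (SimpleGraph.fromEdgeSet (f ∪ f')).Reachable u u' := by
    intro u u'
    have hu : u ∈ (w.transfer _ hsub').support := by
      rw [SimpleGraph.Walk.support_transfer]; exact hwham.mem_support u
    have hu' : u' ∈ (w.transfer _ hsub').support := by
      rw [SimpleGraph.Walk.support_transfer]; exact hwham.mem_support u'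
    exact (((w.transfer _ hsub').takeUntil u hu).reachable.symm.trans
      ((w.transfer _ hsub').takeUntil u' hu').reachable)
  set e1 := pmEquiv hf with he1
  set e2 := pmEquiv hf' with he2
  set σ : Equiv.Perm (Fin n) := e2.trans e1.symm with hσ
  have key : ∀ x y : Fin n, σ.SameCycle x y := by
    intro x y
    have step : ∀ u u' : Fin n ⊕ Fin n, (SimpleGraph.fromEdgeSet (f ∪ f')).Adj u u' →
        Sum.elim (σ.SameCycle x) (fun b => σ.SameCycle x (e1.symm b)) u →
        Sum.elim (σ.SameCycle x) (fun b => σ.SameCycle x (e1.symm b)) u' := by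
      intro u u' huv hq
      rw [SimpleGraph.fromEdgeSet_adj] at huv
      have hmem : s(u, u') ∈ f ∪ f' := huv.1
      have hGadj : (completeBipartiteGraph (Fin n) (Fin n)).Adj u u' := hsub hmem
      match u, u' with
      | inl a, inl a' => simp [completeBipartiteGraph_adj] at hGadj
      | inr b, inr b' => simp [completeBipartiteGraph_adj] at hGadj
      | inl a, inr b =>
        simp only [Sum.elim_inl] at hq
        simp only [Sum.elim_inr]
        rcases hmem with hm | hm
        · rw [← pmEquiv_eq hf hm, ← he1, Equiv.symm_apply_apply]
          exact hq
        · rw [← pmEquiv_eq hf' hm, ← he2]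
          have : e1.symm (e2 a) = σ a := rfl
          rw [this]
          exact (Equiv.Perm.sameCycle_apply_right).mpr hq
      | inr b, inl a =>
        simp only [Sum.elim_inr] at hq
        simp only [Sum.elim_inl]
        rcases hmem with hm | hm
        · rw [Sym2.eq_swap] at hm
          rw [← pmEquiv_eq hf hm, ← he1, Equiv.symm_apply_apply] at hq
          exact hq
        · rw [Sym2.eq_swap] at hm
          rw [← pmEquiv_eq hf' hm, ← he2] at hq
          have : e1.symm (e2 a) = σ a := rfl
          rw [this] at hq
          exact (Equiv.Perm.sameCycle_apply_right).mp hq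
    obtain ⟨p⟩ := hreach (inl x) (inl y)
    have walkind : ∀ (u u' : Fin n ⊕ Fin n) (p : (SimpleGraph.fromEdgeSet (f ∪ f')).Walk u u'),
        Sum.elim (σ.SameCycle x) (fun b => σ.SameCycle x (e1.symm b)) u →
        Sum.elim (σ.SameCycle x) (fun b => σ.SameCycle x (e1.symm b)) u' := by
      intro u u' p
      induction p with
      | nil => exact id
      | cons hadj p ih => exact fun hq => ih (step _ _ hadj hq)
    exact walkind _ _ p (Equiv.Perm.SameCycle.refl σ x)
  have hnofix : ∀ a : Fin n, σ a ≠ a := by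
    intro a ha
    obtain ⟨b, hb, _⟩ := exists_ne_ne hn a a
    obtain ⟨k, hk⟩ := key a b
    rw [Equiv.Perm.zpow_apply_eq_self_of_apply_eq_self ha k] at hk
    exact hb hk.symm
  have hcyc : σ.IsCycle := by
    refine ⟨⟨0, by omega⟩, hnofix _, fun y _ => key _ y⟩
  have hsupp : σ.support = Finset.univ := by
    ext a
    simp [Equiv.Perm.mem_support, hnofix a]
  have hsign := hcyc.sign
  rw [hsupp, Finset.card_univ, Fintype.card_fin] at hsign
  have hmul : σ = (e1.symm : Equiv.Perm (Fin n)) * (e2 : Equiv.Perm (Fin n)) := rfl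
  rw [hmul, map_mul, Equiv.Perm.sign_symm] at hsign
  rw [← hsign]

end POF

/-- If the complete bipartite graph `K_{n,n}` admits a perfect 1-factorisation,
then `n = 2` or `n` is odd. -/
theorem stmt0 (n : ℕ) (hn : 0 < n)
    (P : Set (Set (Sym2 (Fin n ⊕ Fin n))))
    (h : IsPerfectOneFactorisation (completeBipartiteGraph (Fin n) (Fin n)) P) :
    n = 2 ∨ Odd n := by
  open Sum POF in
  rcases Nat.even_or_odd n with heven | hodd
  swap
  · exact Or.inr hodd
  by_cases hne2 : n = 2
  · exact Or.inl hne2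
  exfalso
  have hn3 : 3 ≤ n := by
    obtain ⟨k, hk⟩ := heven
    omega
  obtain ⟨⟨hpm, hdisj, hcover⟩, hperf⟩ := h
  have i0 : Fin n := ⟨0, by omega⟩
  have getf : ∀ (j : Fin n), ∃ g ∈ P, s(inl i0, inr j) ∈ g := by
    intro j
    have hmemE : s(inl i0, inr j) ∈ (completeBipartiteGraph (Fin n) (Fin n)).edgeSet := by
      rw [SimpleGraph.mem_edgeSet]
      simp [completeBipartiteGraph_adj]
    rw [← hcover] at hmemE
    obtain ⟨g, hg, hmem⟩ := hmemE
    exact ⟨g, hg, hmem⟩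
  obtain ⟨f1, hf1P, hf1⟩ := getf i0
  have hpm1 := hpm f1 hf1P
  obtain ⟨j1, hj1a, _⟩ := exists_ne_ne hn3 (pmEquiv hpm1 i0) (pmEquiv hpm1 i0)
  obtain ⟨f2, hf2P, hf2⟩ := getf j1
  have hpm2 := hpm f2 hf2P
  have hne12 : f1 ≠ f2 := by
    intro hh; subst hh
    exact hj1a (pmEquiv_eq hpm1 hf2).symm
  obtain ⟨j2, hj2a, hj2b⟩ := exists_ne_ne hn3 (pmEquiv hpm1 i0) (pmEquiv hpm2 i0)
  obtain ⟨f3, hf3P, hf3⟩ := getf j2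
  have hpm3 := hpm f3 hf3P
  have hne13 : f1 ≠ f3 := by
    intro hh; subst hh
    exact hj2a (pmEquiv_eq hpm1 hf3).symm
  have hne23 : f2 ≠ f3 := by
    intro hh; subst hh
    exact hj2b (pmEquiv_eq hpm2 hf3).symm
  have h12 := sign_mul_sign hn3 hpm1 hpm2 (hperf f1 hf1P f2 hf2P hne12)
  have h13 := sign_mul_sign hn3 hpm1 hpm3 (hperf f1 hf1P f3 hf3P hne13)
  have h23 := sign_mul_sign hn3 hpm2 hpm3 (hperf f2 hf2P f3 hf3P hne23)
  rw [heven.neg_one_pow] at h12 h13 h23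
  have hs23 : Equiv.Perm.sign (pmEquiv hpm2) = Equiv.Perm.sign (pmEquiv hpm3) :=
    mul_left_cancel (h12.trans h13.symm)
  rw [← hs23, Int.units_mul_self] at h23
  exact absurd h23 (by decide)
end

section
/- Let $n$ be a positive integer and let $L$ be a Latin square of order $n$. Then $L$ is row-Hamiltonian if and only if its row-inverse (the $(132)$-conjugate) is row-Hamiltonian. -/
/-- A Latin square as a set of triples (row, column, symbol): any two coordinates
determine the third uniquely. -/
def IsLatinSet {α : Type*} (T : Set (Fin 3 → α)) : Prop :=
  ∀ i j : Fin 3, i ≠ j → ∀ a b : α, ∃! t, t ∈ T ∧ t i = a ∧ t j = b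

/-- The `σ`-conjugate of a Latin square viewed as a set of triples. -/
def conjSq {α : Type*} (σ : Equiv.Perm (Fin 3)) (T : Set (Fin 3 → α)) : Set (Fin 3 → α) :=
  {t | t ∘ σ ∈ T}

/-- `T'` is obtained from `T` by permuting rows, columns and symbols. -/
def IsotopicSet {α : Type*} (T T' : Set (Fin 3 → α)) : Prop :=
  ∃ f : Fin 3 → Equiv.Perm α, T' = (fun t i => f i (t i)) '' T

/-- `T` has a proper subrectangle: rows `R`, columns `C` with `1 < |R| ≤ |C| < n`
whose submatrix uses exactly `|C|` symbols (i.e. is a Latin rectangle). -/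
def HasProperSubrectSet {α : Type*} [Fintype α] (T : Set (Fin 3 → α)) : Prop :=
  ∃ R C : Finset α, 1 < R.card ∧ R.card ≤ C.card ∧ C.card < Fintype.card α ∧
    {c | ∃ t ∈ T, t 0 ∈ R ∧ t 1 ∈ C ∧ t 2 = c}.ncard = C.card

/-- A Latin square is row-Hamiltonian iff it has no proper subrectangle. -/
def RowHamSet {α : Type*} [Fintype α] (T : Set (Fin 3 → α)) : Prop := ¬ HasProperSubrectSet T

/-- `ν(T)`: the number of the six conjugates of `T` that are row-Hamiltonian. -/
noncomputable def nuSet {α : Type*} [Fintype α] (T : Set (Fin 3 → α)) : ℕ :=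
  {σ : Equiv.Perm (Fin 3) | RowHamSet (conjSq σ T)}.ncard

lemma latin_conj {α : Type*} (σ : Equiv.Perm (Fin 3)) {T : Set (Fin 3 → α)}
    (hT : IsLatinSet T) : IsLatinSet (conjSq σ T) := by
  intro i j hij a b
  obtain ⟨u, ⟨huT, hui, huj⟩, huniq⟩ := hT (σ.symm i) (σ.symm j)
    (fun h => hij (σ.symm.injective h)) a b
  refine ⟨u ∘ σ.symm, ⟨?_, ?_, ?_⟩, ?_⟩
  · show (u ∘ σ.symm) ∘ σ ∈ T
    have : (u ∘ σ.symm) ∘ σ = u := by funext x; simp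
    rw [this]; exact huT
  · simpa using hui
  · simpa using huj
  · rintro t ⟨htT, hti, htj⟩
    have h1 : (t ∘ σ) ∈ T := htT
    have h2 : (t ∘ σ) (σ.symm i) = a := by simpa using hti
    have h3 : (t ∘ σ) (σ.symm j) = b := by simpa using htj
    have he := huniq _ ⟨h1, h2, h3⟩
    funext x
    calc t x = (t ∘ σ) (σ.symm x) := by simp
    _ = u (σ.symm x) := by rw [he]
    _ = (u ∘ σ.symm) x := rfl

lemma conj_conj {α : Type*} (T : Set (Fin 3 → α)) :
    conjSq (Equiv.swap 1 2) (conjSq (Equiv.swap 1 2) T) = T := by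
  ext t
  show (t ∘ ⇑(Equiv.swap 1 2)) ∘ ⇑(Equiv.swap 1 2) ∈ T ↔ t ∈ T
  rw [show (t ∘ ⇑(Equiv.swap 1 2)) ∘ ⇑(Equiv.swap 1 2) = t from
    funext fun x => by simp [Equiv.swap_apply_self]]

lemma key {n : ℕ} {T : Set (Fin 3 → Fin n)} (hT : IsLatinSet T)
    (h : HasProperSubrectSet T) : HasProperSubrectSet (conjSq (Equiv.swap 1 2) T) := by
  classical
  obtain ⟨R, C, hR, hRC, hCn, hS⟩ := h
  set Sset : Set (Fin n) := {c | ∃ t ∈ T, t 0 ∈ R ∧ t 1 ∈ C ∧ t 2 = c} with hSsetdef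
  have hSfin : Sset.Finite := Set.toFinite _
  set S : Finset (Fin n) := hSfin.toFinset with hSdef
  have hScard : S.card = C.card := by
    rw [hSdef, ← Set.ncard_eq_toFinset_card Sset hSfin]; exact hS
  -- claim A
  have claimA : ∀ r ∈ R, ∀ u ∈ T, u 0 = r → u 2 ∈ Sset → u 1 ∈ C := by
    intro r hr u huT hu0 hu2
    have h01 : (0 : Fin 3) ≠ 1 := by decide
    have h02 : (0 : Fin 3) ≠ 2 := by decide
    let f : Fin n → (Fin 3 → Fin n) := fun c => (hT 0 1 h01 r c).exists.choose
    have hf : ∀ c, f c ∈ T ∧ f c 0 = r ∧ f c 1 = c := fun c => (hT 0 1 h01 r c).exists.choose_spec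
    set D : Finset (Fin n) := C.image (fun c => f c 2) with hDdef
    have hDS : D ⊆ S := by
      intro s hs
      rw [hDdef] at hs
      obtain ⟨c, hc, hcs⟩ := Finset.mem_image.mp hs
      rw [hSdef, Set.Finite.mem_toFinset]
      exact ⟨f c, (hf c).1, by rw [(hf c).2.1]; exact hr, by rw [(hf c).2.2]; exact hc, hcs⟩
    have hinj : Set.InjOn (fun c => f c 2) C := by
      intro c hc c' hc' hcc
      have e1 := (hT 0 2 h02 r (f c 2)).unique
        ⟨(hf c).1, (hf c).2.1, rfl⟩ ⟨(hf c').1, (hf c').2.1, hcc.symm⟩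
      rw [← (hf c).2.2, e1, (hf c').2.2]
    have hDcard : D.card = C.card := Finset.card_image_of_injOn hinj
    have hDeq : D = S := Finset.eq_of_subset_of_card_le hDS (by rw [hScard, hDcard])
    have : u 2 ∈ D := by rw [hDeq, hSdef, Set.Finite.mem_toFinset]; exact hu2
    obtain ⟨c, hc, hcu⟩ := Finset.mem_image.mp this
    have e2 := (hT 0 2 h02 r (u 2)).unique ⟨huT, hu0, rfl⟩ ⟨(hf c).1, (hf c).2.1, hcu⟩
    rw [e2, (hf c).2.2]; exact hc
  -- the column set of the conjugate subrectangle equals C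
  have hset : {c | ∃ t ∈ conjSq (Equiv.swap 1 2) T, t 0 ∈ R ∧ t 1 ∈ S ∧ t 2 = c} = ↑C := by
    ext c
    constructor
    · rintro ⟨t, htT, ht0, ht1, ht2⟩
      have huT : t ∘ ⇑(Equiv.swap 1 2) ∈ T := htT
      have e0 : (t ∘ ⇑(Equiv.swap 1 2)) 0 = t 0 := by
        rw [Function.comp_apply, Equiv.swap_apply_of_ne_of_ne (by decide) (by decide)]
      have e1 : (t ∘ ⇑(Equiv.swap 1 2)) 1 = t 2 := by
        simp [Function.comp_apply, Equiv.swap_apply_left]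
      have e2 : (t ∘ ⇑(Equiv.swap 1 2)) 2 = t 1 := by
        simp [Function.comp_apply, Equiv.swap_apply_right]
      have hmem : (t ∘ ⇑(Equiv.swap 1 2)) 2 ∈ Sset := by
        rw [e2]
        exact (Set.Finite.mem_toFinset hSfin).mp ht1
      have := claimA (t 0) ht0 (t ∘ ⇑(Equiv.swap 1 2)) huT e0 hmem
      rw [e1, ht2] at this
      exact this
    · intro hc
      obtain ⟨r, hr⟩ := Finset.card_pos.mp (by omega : 0 < R.card)
      obtain ⟨u, ⟨huT, hu0, hu1⟩, -⟩ := hT 0 1 (by decide) r c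
      refine ⟨u ∘ ⇑(Equiv.swap 1 2), ?_, ?_, ?_, ?_⟩
      · show (u ∘ ⇑(Equiv.swap 1 2)) ∘ ⇑(Equiv.swap 1 2) ∈ T
        rw [show (u ∘ ⇑(Equiv.swap 1 2)) ∘ ⇑(Equiv.swap 1 2) = u from
          funext fun x => by simp [Equiv.swap_apply_self]]
        exact huT
      · simpa using hu0 ▸ hr
      · show (u ∘ ⇑(Equiv.swap 1 2)) 1 ∈ S
        have : (u ∘ ⇑(Equiv.swap 1 2)) 1 = u 2 := by
          simp [Function.comp_apply, Equiv.swap_apply_left]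
        rw [this, hSdef, Set.Finite.mem_toFinset]
        exact ⟨u, huT, hu0 ▸ hr, hu1 ▸ hc, rfl⟩
      · show (u ∘ ⇑(Equiv.swap 1 2)) 2 = c
        have : (u ∘ ⇑(Equiv.swap 1 2)) 2 = u 1 := by
          simp [Function.comp_apply, Equiv.swap_apply_right]
        rw [this, hu1]
  refine ⟨R, S, hR, by rw [hScard]; exact hRC, by rw [hScard]; exact hCn, ?_⟩
  rw [hset, Set.ncard_coe_finset, hScard]

/-- A Latin square of order `n` is row-Hamiltonian iff its row-inverse
(the `(132)`-conjugate, which swaps the column and symbol coordinates) is. -/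
theorem stmt2 {n : ℕ} (hn : 0 < n) (T : Set (Fin 3 → Fin n)) (hT : IsLatinSet T) :
    RowHamSet T ↔ RowHamSet (conjSq (Equiv.swap 1 2) T) := by
  have h2 : HasProperSubrectSet (conjSq (Equiv.swap 1 2) T) → HasProperSubrectSet T := by
    intro h
    have := key (latin_conj _ hT) h
    rwa [conj_conj] at this
  exact not_congr ⟨key hT, h2⟩
end

section
/- Suppose $L$ is a Latin square of order $n$ that is isotopic to its transpose and the $(321)$-conjugate of $L$ is row-Hamiltonian. Then $\nu(L) \in \{2, 6\}$. -/
open Equiv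

lemma conjSq_conjSq {α : Type*} (σ π : Perm (Fin 3)) (T : Set (Fin 3 → α)) :
    conjSq σ (conjSq π T) = conjSq (σ * π) T := rfl

lemma isLatinSet_conjSq {α : Type*} {T : Set (Fin 3 → α)} (hT : IsLatinSet T)
    (σ : Perm (Fin 3)) : IsLatinSet (conjSq σ T) := by
  intro i j hij a b
  obtain ⟨s, ⟨hsT, hsi, hsj⟩, hu⟩ := hT (σ.symm i) (σ.symm j)
    (fun h => hij (by simpa using congrArg σ h)) a b
  refine ⟨s ∘ ⇑σ.symm, ⟨?_, ?_, ?_⟩, ?_⟩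
  · show (s ∘ ⇑σ.symm) ∘ ⇑σ ∈ T
    have h : (s ∘ ⇑σ.symm) ∘ ⇑σ = s := by ext x; simp
    rw [h]; exact hsT
  · simpa using hsi
  · simpa using hsj
  · rintro t ⟨htT, hti, htj⟩
    have h2 : t ∘ ⇑σ = s := hu (t ∘ ⇑σ) ⟨htT, by simpa using hti, by simpa using htj⟩
    ext x
    have := congrFun h2 (σ.symm x)
    simpa using this

lemma isotopicSet_symm {α : Type*} {T T' : Set (Fin 3 → α)} (h : IsotopicSet T T') :
    IsotopicSet T' T := by
  obtain ⟨f, hf⟩ := h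
  refine ⟨fun i => (f i).symm, ?_⟩
  rw [hf, Set.image_image]
  simp

lemma isotopicSet_conjSq {α : Type*} {T T' : Set (Fin 3 → α)} (σ : Perm (Fin 3))
    (h : IsotopicSet T T') : IsotopicSet (conjSq σ T) (conjSq σ T') := by
  obtain ⟨f, hf⟩ := h
  refine ⟨fun i => f (σ.symm i), ?_⟩
  ext t
  constructor
  · intro ht
    have ht' : t ∘ ⇑σ ∈ T' := ht
    rw [hf] at ht'
    obtain ⟨s, hsT, hst⟩ := ht'
    refine ⟨s ∘ ⇑σ.symm, ?_, ?_⟩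
    · show (s ∘ ⇑σ.symm) ∘ ⇑σ ∈ T
      have h : (s ∘ ⇑σ.symm) ∘ ⇑σ = s := by ext x; simp
      rw [h]; exact hsT
    · ext i
      have := congrFun hst (σ.symm i)
      simpa using this
  · rintro ⟨u, huT, hut⟩
    show t ∘ ⇑σ ∈ T'
    rw [hf]
    refine ⟨u ∘ ⇑σ, huT, ?_⟩
    ext i
    have := congrFun hut (σ i)
    simpa using this

lemma hps_image {α : Type*} [Fintype α] {T : Set (Fin 3 → α)} (f : Fin 3 → Perm α)
    (h : HasProperSubrectSet T) :
    HasProperSubrectSet ((fun t i => f i (t i)) '' T) := by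
  classical
  obtain ⟨R, C, h1, h2, h3, h4⟩ := h
  refine ⟨R.image (f 0), C.image (f 1), ?_, ?_, ?_, ?_⟩
  · rwa [Finset.card_image_of_injective _ (f 0).injective]
  · rwa [Finset.card_image_of_injective _ (f 0).injective,
      Finset.card_image_of_injective _ (f 1).injective]
  · rwa [Finset.card_image_of_injective _ (f 1).injective]
  · have key : {c | ∃ t ∈ (fun t i => f i (t i)) '' T,
        t 0 ∈ R.image (f 0) ∧ t 1 ∈ C.image (f 1) ∧ t 2 = c}
        = (f 2) '' {c | ∃ t ∈ T, t 0 ∈ R ∧ t 1 ∈ C ∧ t 2 = c} := by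
      ext c
      simp only [Set.mem_image, Set.mem_setOf_eq]
      constructor
      · rintro ⟨t, ⟨s, hsT, rfl⟩, hr, hc, rfl⟩
        simp only [Finset.mem_image] at hr hc
        obtain ⟨r0, hr0, hre⟩ := hr
        obtain ⟨c0, hc0, hce⟩ := hc
        have e0 : r0 = s 0 := (f 0).injective hre
        have e1 : c0 = s 1 := (f 1).injective hce
        exact ⟨s 2, ⟨s, hsT, e0 ▸ hr0, e1 ▸ hc0, rfl⟩, rfl⟩
      · rintro ⟨c0, ⟨s, hsT, hr, hc, rfl⟩, rfl⟩
        exact ⟨fun i => f i (s i), ⟨s, hsT, rfl⟩,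
          Finset.mem_image.mpr ⟨s 0, hr, rfl⟩, Finset.mem_image.mpr ⟨s 1, hc, rfl⟩, rfl⟩
    rw [key, Set.ncard_image_of_injective _ (f 2).injective, h4,
      Finset.card_image_of_injective _ (f 1).injective]

lemma rowHam_of_isotopic {α : Type*} [Fintype α] {T T' : Set (Fin 3 → α)}
    (h : IsotopicSet T T') : RowHamSet T ↔ RowHamSet T' := by
  unfold RowHamSet
  constructor
  · intro hr hps
    obtain ⟨f, hf⟩ := isotopicSet_symm h
    exact hr (hf ▸ hps_image f hps)
  · intro hr hps
    obtain ⟨f, hf⟩ := h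
    exact hr (hf ▸ hps_image f hps)

lemma hps_swap12 {n : ℕ} {T : Set (Fin 3 → Fin n)} (hT : IsLatinSet T)
    (h : HasProperSubrectSet T) : HasProperSubrectSet (conjSq (swap 1 2) T) := by
  classical
  obtain ⟨R, C, h1, h2, h3, hS⟩ := h
  set Sset : Set (Fin n) := {c | ∃ t ∈ T, t 0 ∈ R ∧ t 1 ∈ C ∧ t 2 = c} with hSset
  have hfin : Sset.Finite := Set.toFinite _
  set S : Finset (Fin n) := hfin.toFinset with hSdef
  have hScard : S.card = C.card := by
    rw [← hS]; exact (Set.ncard_eq_toFinset_card _ hfin).symm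
  have uniq : ∀ (i j : Fin 3), i ≠ j → ∀ t₁ ∈ T, ∀ t₂ ∈ T,
      t₁ i = t₂ i → t₁ j = t₂ j → t₁ = t₂ := by
    intro i j hij t₁ h₁ t₂ h₂ hi hj
    exact (hT i j hij (t₂ i) (t₂ j)).unique ⟨h₁, hi, hj⟩ ⟨h₂, rfl, rfl⟩
  choose t ht using fun (r c : Fin n) => (hT 0 1 (by decide) r c).exists
  -- ht : ∀ r c, t r c ∈ T ∧ t r c 0 = r ∧ t r c 1 = c
  have hsym_mem : ∀ r ∈ R, ∀ c ∈ C, t r c 2 ∈ S := by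
    intro r hr c hc
    exact hfin.mem_toFinset.mpr ⟨t r c, (ht r c).1, by rw [(ht r c).2.1]; exact hr, by rw [(ht r c).2.2]; exact hc, rfl⟩
  have step1 : ∀ r ∈ R, ∀ s ∈ S, ∃ c ∈ C, t r c 2 = s := by
    intro r hr s hs
    have hinj : Function.Injective (fun c => t r c 2) := by
      intro c c' hcc
      have : t r c = t r c' := uniq 0 2 (by decide) _ (ht r c).1 _ (ht r c').1
        (by rw [(ht r c).2.1, (ht r c').2.1]) hcc
      rw [← (ht r c).2.2, ← (ht r c').2.2, this]
    have hsub : C.image (fun c => t r c 2) ⊆ S := by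
      intro s' hs'
      obtain ⟨c, hc, rfl⟩ := Finset.mem_image.mp hs'
      exact hsym_mem r hr c hc
    have heq : C.image (fun c => t r c 2) = S :=
      Finset.eq_of_subset_of_card_le hsub
        (by rw [hScard, Finset.card_image_of_injective _ hinj])
    have : s ∈ C.image (fun c => t r c 2) := heq ▸ hs
    obtain ⟨c, hc, hcs⟩ := Finset.mem_image.mp this
    exact ⟨c, hc, hcs⟩
  have step2 : ∀ u ∈ T, u 0 ∈ R → u 2 ∈ S → u 1 ∈ C := by
    intro u hu hr hs
    obtain ⟨c, hc, hts⟩ := step1 (u 0) hr (u 2) hs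
    have : u = t (u 0) c := uniq 0 2 (by decide) u hu _ (ht (u 0) c).1
      ((ht (u 0) c).2.1).symm hts.symm
    rw [this, (ht (u 0) c).2.2]; exact hc
  refine ⟨R, S, h1, by rw [hScard]; exact h2, by rw [hScard]; exact h3, ?_⟩
  have hset : {c | ∃ t' ∈ conjSq (swap 1 2) T, t' 0 ∈ R ∧ t' 1 ∈ S ∧ t' 2 = c}
      = (↑C : Set (Fin n)) := by
    ext c
    simp only [Set.mem_setOf_eq, Finset.coe_sort_coe, Finset.mem_coe]
    constructor
    · rintro ⟨t', ht', hr, hs, rfl⟩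
      have hmem : t' ∘ ⇑(swap 1 2 : Perm (Fin 3)) ∈ T := ht'
      have e0 : (t' ∘ ⇑(swap 1 2 : Perm (Fin 3))) 0 = t' 0 := by
        simp [Function.comp, show (swap 1 2 : Perm (Fin 3)) 0 = 0 by decide]
      have e1 : (t' ∘ ⇑(swap 1 2 : Perm (Fin 3))) 1 = t' 2 := by
        simp [Function.comp, show (swap 1 2 : Perm (Fin 3)) 1 = 2 by decide]
      have e2 : (t' ∘ ⇑(swap 1 2 : Perm (Fin 3))) 2 = t' 1 := by
        simp [Function.comp, show (swap 1 2 : Perm (Fin 3)) 2 = 1 by decide]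
      have := step2 _ hmem (e0 ▸ hr) (e2 ▸ hs)
      rwa [e1] at this
    · intro hc
      obtain ⟨r, hr⟩ := Finset.card_pos.mp (Nat.lt_of_lt_of_le Nat.one_pos h1.le)
      refine ⟨t r c ∘ ⇑(swap 1 2 : Perm (Fin 3)), ?_, ?_, ?_, ?_⟩
      · show (t r c ∘ ⇑(swap 1 2 : Perm (Fin 3))) ∘ ⇑(swap 1 2 : Perm (Fin 3)) ∈ T
        have : (t r c ∘ ⇑(swap 1 2 : Perm (Fin 3))) ∘ ⇑(swap 1 2 : Perm (Fin 3)) = t r c := by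
          ext x; simp
        rw [this]; exact (ht r c).1
      · simpa [Function.comp, show (swap 1 2 : Perm (Fin 3)) 0 = 0 by decide]
          using (ht r c).2.1.symm ▸ hr
      · simpa [Function.comp, show (swap 1 2 : Perm (Fin 3)) 1 = 2 by decide]
          using hsym_mem r hr c hc
      · simpa [Function.comp, show (swap 1 2 : Perm (Fin 3)) 2 = 1 by decide]
          using (ht r c).2.2
  rw [hset, Set.ncard_coe_finset, hScard.symm]

/-- If a Latin square `L` is isotopic to its transpose (its `(213)`-conjugate) and the
`(321)`-conjugate of `L` (swapping rows and symbols) is row-Hamiltonian, then `ν(L) ∈ {2, 6}`. -/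
theorem stmt5 {n : ℕ} (T : Set (Fin 3 → Fin n)) (hT : IsLatinSet T)
    (hsym : IsotopicSet T (conjSq (Equiv.swap 0 1) T))
    (hrh : RowHamSet (conjSq (Equiv.swap 0 2) T)) :
    nuSet T ∈ ({2, 6} : Set ℕ) := by
  classical
  set P : Perm (Fin 3) → Prop := fun σ => RowHamSet (conjSq σ T) with hP
  have key1 : ∀ σ, P σ ↔ P (σ * swap 0 1) := by
    intro σ
    have h := isotopicSet_conjSq σ hsym
    rw [conjSq_conjSq] at h
    exact rowHam_of_isotopic h
  have key2 : ∀ σ, P σ ↔ P (swap 1 2 * σ) := by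
    intro σ
    constructor
    · intro hσ hps
      have h' : HasProperSubrectSet (conjSq (swap 1 2 * (swap 1 2 * σ)) T) := by
        rw [← conjSq_conjSq]
        exact hps_swap12 (isLatinSet_conjSq hT _) hps
      rw [← mul_assoc, Equiv.swap_mul_self, one_mul] at h'
      exact hσ h'
    · intro hσ hps
      have h' : HasProperSubrectSet (conjSq (swap 1 2 * σ) T) := by
        rw [← conjSq_conjSq]
        exact hps_swap12 (isLatinSet_conjSq hT _) hps
      exact hσ h'
  have h02 : P (swap 0 2) := hrh
  have h012 : P (swap 0 2 * swap 0 1) := (key1 _).mp h02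
  have h6 : ∀ σ : Perm (Fin 3), σ = 1 ∨ σ = swap 0 1 ∨ σ = swap 1 2 ∨
      σ = swap 1 2 * swap 0 1 ∨ σ = swap 0 2 ∨ σ = swap 0 2 * swap 0 1 := by decide
  have hnu : nuSet T = {σ : Perm (Fin 3) | P σ}.ncard := rfl
  by_cases hone : P 1
  · have h01 : P (swap 0 1) := by have := (key1 1).mp hone; rwa [one_mul] at this
    have h12 : P (swap 1 2) := by have := (key2 1).mp hone; rwa [mul_one] at this
    have h1201 : P (swap 1 2 * swap 0 1) := (key2 _).mp h01
    have huniv : {σ : Perm (Fin 3) | P σ} = Set.univ := by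
      ext σ
      simp only [Set.mem_setOf_eq, Set.mem_univ, iff_true]
      rcases h6 σ with h | h | h | h | h | h <;> rw [h] <;> assumption
    rw [hnu, huniv, Set.ncard_univ, Nat.card_eq_fintype_card, Fintype.card_perm]
    simp [Nat.factorial]
  · have h01 : ¬ P (swap 0 1) := fun h => hone (by
      have := (key1 1).mpr (by rwa [one_mul]); exact this)
    have h12 : ¬ P (swap 1 2) := fun h => hone ((key2 1).mpr (by rwa [mul_one]))
    have h1201 : ¬ P (swap 1 2 * swap 0 1) := fun h => h01 ((key2 _).mpr h)
    have hpair : {σ : Perm (Fin 3) | P σ} = {swap 0 2, swap 0 2 * swap 0 1} := by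
      ext σ
      simp only [Set.mem_setOf_eq, Set.mem_insert_iff, Set.mem_singleton_iff]
      constructor
      · intro hσ
        rcases h6 σ with h | h | h | h | h | h <;> subst h
        · exact absurd hσ hone
        · exact absurd hσ h01
        · exact absurd hσ h12
        · exact absurd hσ h1201
        · exact Or.inl rfl
        · exact Or.inr rfl
      · rintro (rfl | rfl)
        · exact h02
        · exact h012
    rw [hnu, hpair, Set.ncard_pair (by decide)]
    simp
end

section
/- Let $p$ be an odd prime and let $GA_{2p}$ be the $1$-factorisation of $K_{2p}$ with vertex set $\mathbb{Z}_p\times\{1,2\}$ consisting of the factors $f_i$ ($i \in \mathbb{Z}_p$) and $g_i$ ($i \in \mathbb{Z}_p\setminus\{0\}$) as defined below. Then for any two distinct factors $h, h'$ of $GA_{2p}$, the union $h \cup h'$ is a Hamiltonian cycle of $K_{2p}$; that is, $GA_{2p}$ is a perfect $1$-factorisation. -/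
/-- The 1-factor `f_i` of `K_{2p}` on vertex set `ℤ_p × {1,2}` (here `Fin 2` plays the
role of `{1,2}`): the edges `{(i+j,z),(i-j,z)}` for `1 ≤ j ≤ (p-1)/2` together with the
crossing edge `{(i,1),(i,2)}`. -/
def fFac (p : ℕ) (i : ZMod p) : Set (Sym2 (ZMod p × Fin 2)) :=
  {e | ∃ (j : ℕ) (z : Fin 2), 1 ≤ j ∧ j ≤ (p - 1) / 2 ∧
        e = s((i + (j : ZMod p), z), (i - (j : ZMod p), z))} ∪
    {s((i, 0), (i, 1))}

/-- The 1-factor `g_i` of `K_{2p}`: the edges `{(j,1),(i+j,2)}` for `j ∈ ℤ_p`. -/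
def gFac (p : ℕ) (i : ZMod p) : Set (Sym2 (ZMod p × Fin 2)) :=
  {e | ∃ j : ZMod p, e = s((j, 0), (i + j, 1))}

/-!
If `σ` and `τ` are involutions of a set of `2N` vertices, the union of the matchings
`{v, σ v}` and `{v, τ v}` is a Hamiltonian cycle as soon as the closed walk
`v, σ v, τ σ v, σ τ σ v, …` visits `2N` distinct vertices before returning to `v`.
Every factor of `GA_{2p}` is such a matching: `f_i` pairs `x` with its mirror image `2i - x`
on the same level (and the two copies of `i` with each other), and `g_b` pairs `(x, 1)` with
`(x + b, 2)`. Affine coordinates `x ↦ t + d x` conjugate any two distinct factors to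
`f_1, f_0`, or `f_0, g_1`, or `g_1, g_0`, and in these three cases the alternating walk is
written down explicitly; checking that it has no repetition is arithmetic modulo the odd
number `p`.
-/

open SimpleGraph Function

namespace SimpleGraph

variable {V W : Type*}

theorem isHamCycleEdges_range_of_periodic [Fintype V] [DecidableEq V] (c : ℕ → V)
    (hc : Periodic c (Fintype.card V)) (hinj : Set.InjOn c (Set.Iio (Fintype.card V)))
    (h3 : 3 ≤ Fintype.card V) :
    IsHamCycleEdges (⊤ : SimpleGraph V) (Set.range fun k => s(c k, c (k + 1))) := by
  obtain ⟨n, hn⟩ : ∃ n, Fintype.card V = n + 3 := ⟨_, (Nat.sub_add_cancel h3).symm⟩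
  let f : Fin (n + 3) → V := fun i => c i
  have hf : Injective f := fun i j h => Fin.ext (hinj (by simp [hn]) (by simp [hn]) h)
  let F : cycleGraph (n + 3) →g (⊤ : SimpleGraph V) := ⟨f, fun h => hf.ne h.ne⟩
  let W := (cycleGraph.cycle n).map F
  -- `cycleGraph.cycle` runs backwards through `0, n + 2, …, 1, 0`
  have hvert : ∀ i ≤ n + 3, W.getVert i = c (n + 3 - i) := by
    intro i hi
    rw [Walk.getVert_map, cycleGraph.getVert_cycle hi]
    exact (hn ▸ hc).map_mod_nat _
  have hW : {e | e ∈ W.edges} = Set.range fun k => s(c k, c (k + 1)) := by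
    ext e
    induction e using Sym2.ind with
    | h u v =>
      simp only [Set.mem_ofPred_eq, Walk.mk_mem_edges_iff_exists, Set.mem_range, W,
        Walk.length_map, cycleGraph.length_cycle]
      constructor
      · rintro ⟨i, hi, he⟩
        refine ⟨n + 2 - i, ?_⟩
        rw [← he, hvert i hi.le, hvert (i + 1) hi, Sym2.eq_swap,
          show n + 3 - i = n + 2 - i + 1 by omega, show n + 3 - (i + 1) = n + 2 - i by omega]
      · rintro ⟨k, he⟩
        have hk : c k = c (k % (n + 3)) := (hn ▸ hc.map_mod_nat k).symm
        have hk1 : c (k + 1) = c (k % (n + 3) + 1) := by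
          rw [← hn, ← hc.map_mod_nat (k + 1), ← Nat.mod_add_mod, hc.map_mod_nat]
        have hlt := Nat.mod_lt k (show 0 < n + 3 by omega)
        refine ⟨n + 2 - k % (n + 3), by omega, ?_⟩
        rw [← he, hvert _ (by omega), hvert _ (by omega), Sym2.eq_swap, hk, hk1,
          show n + 3 - (n + 2 - k % (n + 3)) = k % (n + 3) + 1 by omega,
          show n + 3 - (n + 2 - k % (n + 3) + 1) = k % (n + 3) by omega]
  refine ⟨fun e he => W.edges_subset_edgeSet (by rwa [← hW] at he), F 0, W, ?_, hW⟩
  rw [Walk.isHamiltonianCycle_iff_isCycle_and_length_eq]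
  exact ⟨(Walk.isCycle_map_iff_of_injective hf).mpr cycleGraph.isCycle_cycle, by simp [W, hn]⟩

def alternatingSeq (σ τ : V → V) (v : V) (k : ℕ) : V :=
  if Even k then (τ ∘ σ)^[k / 2] v else σ ((τ ∘ σ)^[k / 2] v)

section alternatingSeq

variable {σ τ : V → V} {v : V}

@[simp]
theorem alternatingSeq_two_mul (m : ℕ) : alternatingSeq σ τ v (2 * m) = (τ ∘ σ)^[m] v := by
  simp [alternatingSeq]

@[simp]
theorem alternatingSeq_two_mul_add_one (m : ℕ) :
    alternatingSeq σ τ v (2 * m + 1) = σ ((τ ∘ σ)^[m] v) := by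
  simp [alternatingSeq, show (2 * m + 1) / 2 = m by omega]

theorem alternatingSeq_two_mul_add_two (m : ℕ) :
    alternatingSeq σ τ v (2 * m + 2) = τ (alternatingSeq σ τ v (2 * m + 1)) := by
  rw [show 2 * m + 2 = 2 * (m + 1) by ring, alternatingSeq_two_mul, iterate_succ_apply',
    alternatingSeq_two_mul_add_one, comp_apply]

theorem alternatingSeq_neighbours (hσ : Involutive σ) (hτ : Involutive τ) (j : ℕ) :
    let c := alternatingSeq σ τ v
    (σ (c (j + 1)) = c j ∧ τ (c (j + 1)) = c (j + 2)) ∨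
      (τ (c (j + 1)) = c j ∧ σ (c (j + 1)) = c (j + 2)) := by
  obtain ⟨m, rfl | rfl⟩ := Nat.even_or_odd' j
  · exact Or.inl ⟨by rw [alternatingSeq_two_mul_add_one, hσ, alternatingSeq_two_mul],
      (alternatingSeq_two_mul_add_two m).symm⟩
  · rw [show 2 * m + 1 + 1 = 2 * m + 2 by ring, show 2 * m + 1 + 2 = 2 * (m + 1) + 1 by ring]
    refine Or.inr ⟨by rw [alternatingSeq_two_mul_add_two, hτ], ?_⟩
    rw [alternatingSeq_two_mul_add_one, show 2 * m + 2 = 2 * (m + 1) by ring,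
      alternatingSeq_two_mul]

theorem range_alternatingSeq_edges (hσ : Involutive σ) (hτ : Involutive τ)
    (hsurj : Surjective fun j => alternatingSeq σ τ v (j + 1)) :
    (Set.range fun k => s(alternatingSeq σ τ v k, alternatingSeq σ τ v (k + 1))) =
      Set.range (fun w => s(w, σ w)) ∪ Set.range (fun w => s(w, τ w)) := by
  refine Set.Subset.antisymm (Set.range_subset_iff.mpr fun k => ?_) ?_
  · obtain ⟨m, rfl | rfl⟩ := Nat.even_or_odd' k
    · exact Or.inl ⟨_, by rw [alternatingSeq_two_mul, alternatingSeq_two_mul_add_one]⟩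
    · exact Or.inr ⟨_, by rw [alternatingSeq_two_mul_add_two]⟩
  rintro e (⟨w, rfl⟩ | ⟨w, rfl⟩) <;> obtain ⟨j, rfl⟩ := hsurj w <;>
    rcases alternatingSeq_neighbours hσ hτ j with ⟨h₁, h₂⟩ | ⟨h₁, h₂⟩
  exacts [⟨j, by dsimp only; rw [h₁, Sym2.eq_swap]⟩, ⟨j + 1, by dsimp only; rw [h₂]⟩,
    ⟨j + 1, by dsimp only; rw [h₂]⟩, ⟨j, by dsimp only; rw [h₁, Sym2.eq_swap]⟩]

end alternatingSeq

/-- `x m` is the vertex in position `2 m` of `alternatingSeq σ τ (x 0)`, for `m ≤ N`. -/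
structure IsAlternatingCycle (σ τ : V → V) (N : ℕ) (x : ℕ → V) : Prop where
  step : ∀ m < N, x (m + 1) = τ (σ (x m))
  closes : x N = x 0
  injOn : ∀ m < N, ∀ m' < N, x m = x m' → m = m'
  ne_apply : ∀ m < N, ∀ m' < N, x m ≠ σ (x m')

namespace IsAlternatingCycle

variable {σ τ : V → V} {N : ℕ} {x : ℕ → V}

theorem map {σ₀ τ₀ : W → W} {x : ℕ → W} (hx : IsAlternatingCycle σ₀ τ₀ N x) {φ : W → V}
    (hφ : Injective φ) (hσ : Semiconj φ σ₀ σ) (hτ : Semiconj φ τ₀ τ) :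
    IsAlternatingCycle σ τ N (φ ∘ x) where
  step m hm := by simp only [comp_apply, hx.step m hm, hτ.eq, hσ.eq]
  closes := congrArg φ hx.closes
  injOn m hm m' hm' h := hx.injOn m hm m' hm' (hφ h)
  ne_apply m hm m' hm' h := hx.ne_apply m hm m' hm' (hφ (h.trans (hσ.eq _).symm))

theorem iterate_eq (hx : IsAlternatingCycle σ τ N x) {m : ℕ} (hm : m ≤ N) :
    (τ ∘ σ)^[m] (x 0) = x m := by
  induction m with
  | zero => rfl
  | succ m ih => rw [iterate_succ_apply', ih (by omega), hx.step m hm, comp_apply]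

theorem periodic_alternatingSeq (hx : IsAlternatingCycle σ τ N x) :
    Periodic (alternatingSeq σ τ (x 0)) (2 * N) := fun k => by
  obtain ⟨m, rfl | rfl⟩ := Nat.even_or_odd' k
  · rw [← mul_add, alternatingSeq_two_mul, alternatingSeq_two_mul, iterate_add_apply,
      hx.iterate_eq le_rfl, hx.closes]
  · rw [add_right_comm, ← mul_add, alternatingSeq_two_mul_add_one,
      alternatingSeq_two_mul_add_one, iterate_add_apply, hx.iterate_eq le_rfl, hx.closes]

theorem injOn_alternatingSeq (hx : IsAlternatingCycle σ τ N x) (hσ : Injective σ) :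
    Set.InjOn (alternatingSeq σ τ (x 0)) (Set.Iio (2 * N)) := by
  intro k hk k' hk' h
  simp only [Set.mem_Iio] at hk hk'
  obtain ⟨m, rfl | rfl⟩ := Nat.even_or_odd' k <;>
    obtain ⟨m', rfl | rfl⟩ := Nat.even_or_odd' k' <;>
    simp only [alternatingSeq_two_mul, alternatingSeq_two_mul_add_one,
      hx.iterate_eq (m := m) (by omega), hx.iterate_eq (m := m') (by omega)] at h
  · rw [hx.injOn m (by omega) m' (by omega) h]
  · exact absurd h (hx.ne_apply m (by omega) m' (by omega))
  · exact absurd h.symm (hx.ne_apply m' (by omega) m (by omega))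
  · rw [hx.injOn m (by omega) m' (by omega) (hσ h)]

theorem isHamCycleEdges [Fintype V] [DecidableEq V] (hx : IsAlternatingCycle σ τ N x)
    (hσ : Involutive σ) (hτ : Involutive τ) (hcard : Fintype.card V = 2 * N) (hN : 2 ≤ N) :
    IsHamCycleEdges (⊤ : SimpleGraph V)
      (Set.range (fun v => s(v, σ v)) ∪ Set.range (fun v => s(v, τ v))) := by
  set c := alternatingSeq σ τ (x 0)
  have hper : Periodic c (Fintype.card V) := hcard ▸ hx.periodic_alternatingSeq
  have hinj : Set.InjOn c (Set.Iio (Fintype.card V)) :=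
    hcard ▸ hx.injOn_alternatingSeq hσ.injective
  have hsurj : Surjective fun j => c (j + 1) := by
    intro w
    let f : Fin (Fintype.card V) → V := fun i => c i
    have hf : Injective f := fun i i' h => Fin.ext (hinj i.2 i'.2 h)
    obtain ⟨i, rfl⟩ := ((Fintype.bijective_iff_injective_and_card f).mpr ⟨hf, by simp⟩).2 w
    refine ⟨i + Fintype.card V - 1, ?_⟩
    change c (i + Fintype.card V - 1 + 1) = c i
    rw [Nat.sub_add_cancel (by omega), hper]
  rw [← range_alternatingSeq_edges hσ hτ hsurj]
  exact isHamCycleEdges_range_of_periodic c hper hinj (by omega)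

end IsAlternatingCycle

end SimpleGraph

section

variable {p : ℕ}

theorem intCast_eq_intCast_iff_of_lt {a b : ℤ} (h₁ : -(3 * p : ℤ) < a - b)
    (h₂ : a - b < 3 * p) : (a : ZMod p) = b ↔
      a - b = -(2 * p) ∨ a - b = -p ∨ a - b = 0 ∨ a - b = p ∨ a - b = 2 * p := by
  rw [← sub_eq_zero, ← Int.cast_sub, ZMod.intCast_zmod_eq_zero_iff_dvd]
  generalize a - b = n at *
  constructor
  · rintro ⟨t, rfl⟩
    have hp : (0 : ℤ) < p := by nlinarith
    have : -3 < t ∧ t < 3 := ⟨by nlinarith, by nlinarith⟩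
    obtain ⟨ht₁, ht₂⟩ := this
    interval_cases t <;> omega
  · rintro (rfl | rfl | rfl | rfl | rfl) <;> simp

theorem natCast_zmod_ne_zero {m : ℕ} (h₀ : 0 < m) (h : m < p) : (m : ZMod p) ≠ 0 := by
  rw [Ne, ZMod.natCast_eq_zero_iff]
  exact fun hd => absurd (Nat.le_of_dvd h₀ hd) (by omega)

def fPartner (i : ZMod p) (v : ZMod p × Fin 2) : ZMod p × Fin 2 :=
  (2 * i - v.1, if v.1 = i then v.2.rev else v.2)

def gPartner (b : ZMod p) (v : ZMod p × Fin 2) : ZMod p × Fin 2 :=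
  (v.1 + if v.2 = 0 then b else -b, v.2.rev)

theorem fPartner_involutive (i : ZMod p) : Involutive (fPartner i) := by
  rintro ⟨x, z⟩
  by_cases hx : x = i
  · simp [fPartner, hx, two_mul]
  · simp [fPartner, hx, sub_eq_iff_eq_add, two_mul, Ne.symm hx]

theorem gPartner_involutive (b : ZMod p) : Involutive (gPartner b) := by
  rintro ⟨x, z⟩
  fin_cases z <;> simp [gPartner]

theorem gFac_eq_range (b : ZMod p) : gFac p b = Set.range fun v => s(v, gPartner b v) := by
  ext e
  constructor
  · rintro ⟨j, rfl⟩
    exact ⟨(j, 0), by simp [gPartner, add_comm]⟩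
  · rintro ⟨⟨x, z⟩, rfl⟩
    fin_cases z
    · exact ⟨x, by simp [gPartner, add_comm]⟩
    · exact ⟨x - b, by simp [gPartner, Sym2.eq_swap, sub_eq_add_neg]⟩

theorem fFac_eq_range (hp : Odd p) (i : ZMod p) :
    fFac p i = Set.range fun v => s(v, fPartner i v) := by
  have hp0 : NeZero p := ⟨hp.pos.ne'⟩
  obtain ⟨q, hq⟩ := hp
  ext e
  constructor
  · rintro (⟨j, z, hj₁, hj₂, rfl⟩ | rfl)
    · have hj : (j : ZMod p) ≠ 0 := natCast_zmod_ne_zero (by omega) (by omega)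
      refine ⟨(i + j, z), ?_⟩
      simp only [fPartner, add_eq_left, hj, if_false]
      rw [show 2 * i - (i + j) = i - j by ring]
    · exact ⟨(i, 0), by simp [fPartner, two_mul]⟩
  · rintro ⟨⟨x, z⟩, rfl⟩
    by_cases hx : x = i
    · subst hx
      right
      fin_cases z
      · simp [fPartner, two_mul]
      · simp [fPartner, two_mul, Sym2.eq_swap]
    left
    have hk := ZMod.natCast_zmod_val (x - i)
    have hk₀ : (x - i).val ≠ 0 := by rwa [Ne, ZMod.val_eq_zero, sub_eq_zero]
    have hkp := ZMod.val_lt (x - i)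
    simp only [fPartner, hx, if_false]
    by_cases hkq : (x - i).val ≤ q
    · refine ⟨(x - i).val, z, by omega, by omega, ?_⟩
      rw [hk, add_sub_cancel, show 2 * i - x = i - (x - i) by ring]
    · refine ⟨p - (x - i).val, z, by omega, by omega, ?_⟩
      rw [Nat.cast_sub hkp.le, ZMod.natCast_self, hk, Sym2.eq_swap,
        show i + (0 - (x - i)) = 2 * i - x by ring, show i - (0 - (x - i)) = x by ring]

def affineCoord (t : Fin 2 → ZMod p) (d : ZMod p) (v : ZMod p × Fin 2) : ZMod p × Fin 2 :=
  (t v.2 + d * v.1, v.2)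

theorem affineCoord_injective [Fact p.Prime] (t : Fin 2 → ZMod p) {d : ZMod p} (hd : d ≠ 0) :
    Injective (affineCoord t d) := by
  rintro ⟨x, z⟩ ⟨x', z'⟩ h
  simp only [affineCoord, Prod.mk.injEq] at h
  obtain ⟨h₁, rfl⟩ := h
  rw [mul_left_cancel₀ hd (add_left_cancel h₁)]

theorem semiconj_affineCoord_fPartner [Fact p.Prime] (i : ZMod p) {d : ZMod p} (hd : d ≠ 0)
    {j J : ZMod p} (hJ : J = i + d * j) :
    Semiconj (affineCoord (fun _ => i) d) (fPartner j) (fPartner J) := by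
  rintro ⟨x, z⟩
  simp only [affineCoord, fPartner, hJ, add_right_inj, mul_right_inj' hd, Prod.mk.injEq]
  exact ⟨by ring, trivial⟩

theorem semiconj_affineCoord_gPartner (t : Fin 2 → ZMod p) (d : ZMod p) {b B : ZMod p}
    (hB : B = t 1 - t 0 + d * b) :
    Semiconj (affineCoord t d) (gPartner b) (gPartner B) := by
  rintro ⟨x, z⟩
  fin_cases z <;> simp [affineCoord, gPartner, hB] <;> ring

theorem isAlternatingCycle_gPartner :
    IsAlternatingCycle (gPartner 1) (gPartner 0) p fun m => ((m : ZMod p), 0) where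
  step m _ := by simp [gPartner]
  closes := by simp
  injOn m hm m' hm' h := by
    simpa [ZMod.natCast_eq_natCast_iff', Nat.mod_eq_of_lt hm, Nat.mod_eq_of_lt hm'] using h
  ne_apply m _ m' _ := by simp [gPartner]

-- `-2 m` meets `1`, the fixed point of `f_1`, at `2 m + 1 = p`: there the walk crosses to the
-- other level, and the crossing edge of `f_0` closes it at `m = p`.
theorem isAlternatingCycle_fPartner (hp : Odd p) :
    IsAlternatingCycle (fPartner 1) (fPartner 0) p
      fun m => (-(2 * (m : ZMod p)), if p < 2 * m ∧ m < p then 1 else 0) where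
  step m hm := by
    obtain ⟨q, hq⟩ := hp
    have h₁ := intCast_eq_intCast_iff_of_lt (p := p) (a := -(2 * m)) (b := 1)
      (by omega) (by omega)
    have h₂ := intCast_eq_intCast_iff_of_lt (p := p) (a := 2 + 2 * m) (b := 0)
      (by omega) (by omega)
    push_cast at h₁ h₂
    simp only [fPartner, Prod.mk.injEq, show (2 : ZMod p) * 1 - -(2 * m) = 2 + 2 * m by ring,
      h₁, h₂]
    refine ⟨by push_cast; ring, ?_⟩
    split_ifs <;> first | rfl | (exfalso; omega)
  closes := by simp
  injOn m hm m' hm' h := by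
    obtain ⟨q, hq⟩ := hp
    have := (intCast_eq_intCast_iff_of_lt (p := p) (a := -(2 * m)) (b := -(2 * m')) (by omega)
      (by omega)).mp (by push_cast; exact (Prod.mk.inj h).1)
    omega
  ne_apply m hm m' hm' h := by
    obtain ⟨q, hq⟩ := hp
    simp only [fPartner, Prod.mk.injEq] at h
    obtain ⟨h₁, h₂⟩ := h
    have := (intCast_eq_intCast_iff_of_lt (p := p) (a := 2 * p - 2 * m) (b := 2 + 2 * m')
      (by omega) (by omega)).mp (by push_cast [ZMod.natCast_self]; linear_combination h₁)
    have h₃ := intCast_eq_intCast_iff_of_lt (p := p) (a := -(2 * m')) (b := 1)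
      (by omega) (by omega)
    push_cast at h₃
    simp only [h₃] at h₂
    split_ifs at h₂ <;> first | exact absurd h₂ (by decide) | omega

theorem intCast_ite_neg_eq_zero_iff {m : ℕ} (hm : m < p) :
    ((if Even m then m else -m : ℤ) : ZMod p) = 0 ↔ m = 0 := by
  constructor
  · intro h
    by_contra h₀
    have := natCast_zmod_ne_zero (Nat.pos_of_ne_zero h₀) hm
    split_ifs at h <;> simp_all
  · rintro rfl
    simp

-- The walk runs through `(0, 0), (0, 1), (-1, 0), (1, 0), (2, 1), (-2, 1), (-3, 0), (3, 0), …`.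
theorem isAlternatingCycle_fPartner_gPartner (hp : Odd p) :
    IsAlternatingCycle (fPartner 0) (gPartner 1) p
      fun m =>
        (((if Even m then m else -m : ℤ) : ZMod p), if Even m ∧ m ≠ 0 then 1 else 0) where
  step m hm := by
    rcases Nat.eq_zero_or_pos m with rfl | hm₀
    · simp [fPartner, gPartner]
    obtain ⟨q, hq⟩ := hp
    simp only [fPartner, gPartner, intCast_ite_neg_eq_zero_iff hm, hm₀.ne', if_false,
      Prod.mk.injEq]
    simp only [Nat.even_iff]
    split_ifs <;> first | (exfalso; omega) | exact ⟨by push_cast; ring, rfl⟩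
  closes := by
    obtain ⟨q, hq⟩ := hp
    have : ¬ Even p := by rw [Nat.not_even_iff_odd]; exact ⟨q, hq⟩
    simp [this]
  injOn m hm m' hm' h := by
    obtain ⟨q, hq⟩ := hp
    simp only [Prod.mk.injEq] at h
    obtain ⟨h₁, h₂⟩ := h
    have := (intCast_eq_intCast_iff_of_lt (p := p) (a := if Even m then m else -m)
      (b := if Even m' then m' else -m') (by split_ifs <;> omega) (by split_ifs <;> omega)).mp h₁
    simp only [Nat.even_iff] at this h₂
    split_ifs at this h₂ <;> first | exact absurd h₂ (by decide) | omega
  ne_apply m hm m' hm' h := by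
    obtain ⟨q, hq⟩ := hp
    simp only [fPartner, Prod.mk.injEq, intCast_ite_neg_eq_zero_iff hm'] at h
    obtain ⟨h₁, h₂⟩ := h
    have := (intCast_eq_intCast_iff_of_lt (p := p) (a := if Even m then m else -m)
      (b := -(if Even m' then (m' : ℤ) else -m')) (by split_ifs <;> omega)
      (by split_ifs <;> omega)).mp (by push_cast at h₁ ⊢; linear_combination h₁)
    simp only [Nat.even_iff] at this h₂
    split_ifs at this h₂ <;> first | exact absurd h₂ (by decide) | omega

theorem isHamCycleEdges_fFac_union_fFac [Fact p.Prime] (hp : Odd p) {i i' : ZMod p}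
    (h : i ≠ i') :
    IsHamCycleEdges (⊤ : SimpleGraph (ZMod p × Fin 2)) (fFac p i ∪ fFac p i') := by
  have hd : i' - i ≠ 0 := sub_ne_zero.mpr h.symm
  have hx := (isAlternatingCycle_fPartner hp).map (affineCoord_injective _ hd)
    (semiconj_affineCoord_fPartner i hd (J := i') (by ring))
    (semiconj_affineCoord_fPartner i hd (J := i) (by ring))
  rw [fFac_eq_range hp, fFac_eq_range hp, Set.union_comm]
  exact hx.isHamCycleEdges (fPartner_involutive _) (fPartner_involutive _) (by simp [mul_comm])
    (Nat.Prime.two_le Fact.out)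

theorem isHamCycleEdges_fFac_union_gFac [Fact p.Prime] (hp : Odd p) (i : ZMod p) {a : ZMod p}
    (ha : a ≠ 0) :
    IsHamCycleEdges (⊤ : SimpleGraph (ZMod p × Fin 2)) (fFac p i ∪ gFac p a) := by
  have hx := (isAlternatingCycle_fPartner_gPartner hp).map (affineCoord_injective _ ha)
    (semiconj_affineCoord_fPartner i ha (J := i) (by ring))
    (semiconj_affineCoord_gPartner _ a (B := a) (by ring))
  rw [fFac_eq_range hp, gFac_eq_range]
  exact hx.isHamCycleEdges (fPartner_involutive _) (gPartner_involutive _) (by simp [mul_comm])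
    (Nat.Prime.two_le Fact.out)

theorem isHamCycleEdges_gFac_union_gFac [Fact p.Prime] {a b : ZMod p} (h : a ≠ b) :
    IsHamCycleEdges (⊤ : SimpleGraph (ZMod p × Fin 2)) (gFac p a ∪ gFac p b) := by
  have hd : a - b ≠ 0 := sub_ne_zero.mpr h
  have hx := isAlternatingCycle_gPartner.map (affineCoord_injective ![0, b] hd)
    (semiconj_affineCoord_gPartner _ _ (B := a) (by simp))
    (semiconj_affineCoord_gPartner _ _ (B := b) (by simp))
  rw [gFac_eq_range, gFac_eq_range]
  exact hx.isHamCycleEdges (gPartner_involutive _) (gPartner_involutive _) (by simp [mul_comm])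
    (Nat.Prime.two_le Fact.out)

end

/-- `GA_{2p}` is a perfect 1-factorisation of `K_{2p}`: the union of any two distinct
factors among the `f_i` (`i ∈ ℤ_p`) and `g_i` (`i ≠ 0`) is a Hamiltonian cycle. -/
theorem stmt11 (p : ℕ) (hp : p.Prime) (hodd : Odd p) :
    ∀ h ∈ Set.range (fFac p) ∪ gFac p '' {i : ZMod p | i ≠ 0},
      ∀ h' ∈ Set.range (fFac p) ∪ gFac p '' {i : ZMod p | i ≠ 0},
        h ≠ h' → IsHamCycleEdges (⊤ : SimpleGraph (ZMod p × Fin 2)) (h ∪ h') := by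
  have := Fact.mk hp
  rintro _ (⟨i, rfl⟩ | ⟨a, ha, rfl⟩) _ (⟨i', rfl⟩ | ⟨b, hb, rfl⟩) hne
  · exact isHamCycleEdges_fFac_union_fFac hodd (fun h => hne (h ▸ rfl))
  · exact isHamCycleEdges_fFac_union_gFac hodd i hb
  · rw [Set.union_comm]
    exact isHamCycleEdges_fFac_union_gFac hodd i' ha
  · exact isHamCycleEdges_gFac_union_gFac (fun h => hne (h ▸ rfl))
end
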